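/- Let f : ℕ → ℕ be monotone with f(x) ≥ 2^x for all x, and define the transfinite iterates f_α for α < ε₀ by f_0 = f and f_α(n) = max{f_β(f_β(n)) : β < α and N(β) ≤ N(α) + n} for α > 0, where N is the ordinal norm. Then each f_α is monotone and satisfies f_α(x) ≥ 2^x for all x. -/

import Mathlib

/-!
Transfinite induction on `α`. At `α > 0` the value `F α n` is attained as `F β (F β n)` for some
`β < α` with `N β ≤ N α + n`; such a `β` stays admissible at every `m ≥ n`, so
`F α n = F β (F β n) ≤ F β (F β m) ≤ F α m`. Since `x < 2 ^ x ≤ F β x`, monotonicity of `F β` gives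
`2 ^ x ≤ F β x ≤ F β (F β x) = F α x`.
-/

open Ordinal in
/-- The first epsilon number `ε₀`, the least fixed point of `α ↦ ω ^ α`. -/
noncomputable def eps0 : Ordinal := Ordinal.nfp (fun o => Ordinal.omega0 ^ o) 0

theorem two_pow_le_comp_self {g : ℕ → ℕ} (hg : Monotone g) (h2 : ∀ x, 2 ^ x ≤ g x) (x : ℕ) :
    2 ^ x ≤ g (g x) :=
  calc 2 ^ x ≤ g x := h2 x
    _ ≤ g (g x) := hg (Nat.lt_two_pow_self.le.trans (h2 x))

section Step

variable {ι : Type*} [LT ι] {N : ι → ℕ} {F : ι → ℕ → ℕ} {α : ι}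

theorem monotone_of_eq_max_comp_self
    (hmax : ∀ n : ℕ, (∃ β, β < α ∧ N β ≤ N α + n ∧ F α n = F β (F β n)) ∧
      (∀ β, β < α → N β ≤ N α + n → F β (F β n) ≤ F α n))
    (hmono : ∀ β, β < α → Monotone (F β)) : Monotone (F α) := by
  intro n m hnm
  obtain ⟨β, hβα, hNβ, hattained⟩ := (hmax n).1
  calc F α n = F β (F β n) := hattained
    _ ≤ F β (F β m) := hmono β hβα (hmono β hβα hnm)
    _ ≤ F α m := (hmax m).2 β hβα (by omega)

theorem two_pow_le_of_eq_comp_self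
    (hattained : ∀ n : ℕ, ∃ β, β < α ∧ F α n = F β (F β n))
    (hIH : ∀ β, β < α → Monotone (F β) ∧ ∀ x, 2 ^ x ≤ F β x) (x : ℕ) : 2 ^ x ≤ F α x := by
  obtain ⟨β, hβα, hattained⟩ := hattained x
  obtain ⟨hβm, hβ2⟩ := hIH β hβα
  exact hattained ▸ two_pow_le_comp_self hβm hβ2 x

end Step

open Ordinal in
theorem stmt_18_general (f : ℕ → ℕ) (hfm : Monotone f) (hf : ∀ x, 2 ^ x ≤ f x)
    (N : Ordinal → ℕ)
    (F : Ordinal → ℕ → ℕ) (hF0 : F 0 = f)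
    (hFmax : ∀ α : Ordinal, 0 < α → α < eps0 → ∀ n : ℕ,
      (∃ β, β < α ∧ N β ≤ N α + n ∧ F α n = F β (F β n)) ∧
      (∀ β, β < α → N β ≤ N α + n → F β (F β n) ≤ F α n)) :
    ∀ α : Ordinal, α < eps0 → Monotone (F α) ∧ ∀ x, 2 ^ x ≤ F α x := by
  intro α
  induction α using WellFoundedLT.induction with
  | _ α IH =>
    intro hα
    rcases eq_zero_or_pos α with rfl | hpos
    · exact hF0 ▸ ⟨hfm, hf⟩
    have hmax := hFmax α hpos hα
    have hIH : ∀ β, β < α → Monotone (F β) ∧ ∀ x, 2 ^ x ≤ F β x :=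
      fun β hβα => IH β hβα (hβα.trans hα)
    refine ⟨monotone_of_eq_max_comp_self hmax fun β hβα => (hIH β hβα).1,
      two_pow_le_of_eq_comp_self (fun n => ?_) hIH⟩
    obtain ⟨β, hβα, -, hattained⟩ := (hmax n).1
    exact ⟨β, hβα, hattained⟩

open Ordinal in
theorem stmt_18 (f : ℕ → ℕ) (hfm : Monotone f) (hf : ∀ x, 2 ^ x ≤ f x)
    (N : Ordinal → ℕ) (hN0 : N 0 = 0)
    (F : Ordinal → ℕ → ℕ) (hF0 : F 0 = f)
    (hFmax : ∀ α : Ordinal, 0 < α → α < eps0 → ∀ n : ℕ,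
      (∃ β, β < α ∧ N β ≤ N α + n ∧ F α n = F β (F β n)) ∧
      (∀ β, β < α → N β ≤ N α + n → F β (F β n) ≤ F α n)) :
    ∀ α : Ordinal, α < eps0 → Monotone (F α) ∧ ∀ x, 2 ^ x ≤ F α x :=
  stmt_18_general f hfm hf N F hF0 hFmax
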